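/- Let x ∈ ℝ^d. Set G(y) := ∫ k(y | x₀) p₀(x₀) exp(r(x₀)/β) dx₀. Assume: pₜ is finite in a neighborhood of x and differentiable at x with pₜ(x) > 0; G is finite in a neighborhood of x, differentiable at x, and G(x) > 0. Then qₜ = G/Z, so qₜ(x) > 0 and qₜ is differentiable at x, and the score of the reward-weighted noised marginal decomposes as ∇ log qₜ(x) = ∇ log pₜ(x) + ∇[y ↦ log (G(y)/pₜ(y))](x), where for every y with pₜ(y) > 0 one has G(y)/pₜ(y) = ∫ p(x₀ | y) exp(r(x₀)/β) dx₀, the posterior conditional expectation of exp(r(·)/β). That is, the optimal score for the reward-weighted model equals the pre-trained score plus the gradient of the log conditional expectation of the exponentiated reward. -/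

import Mathlib

/-!
Both identities are linearity of the integral: `qₜ = G / Z` because `Z` is a constant, and
`G(y) / pₜ(y)` is the posterior integral because `pₜ(y)` is. Near `x` both `G` and `pₜ` stay
positive, so `log qₜ = log G - log Z` and `log (G / pₜ) = log G - log pₜ` hold on a neighbourhood
of `x`, and the score identity follows by taking gradients.
-/

open MeasureTheory Filter

noncomputable section

/-- `Vec d` is `ℝ^d`, equipped with Lebesgue measure. -/
abbrev Vec (d : ℕ) := EuclideanSpace ℝ (Fin d)

variable {d : ℕ}

/-- The noised marginal `pₜ(x) = ∫ k(x | x₀) p₀(x₀) dx₀`. -/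
def pT (k : Vec d → Vec d → ℝ) (p₀ : Vec d → ℝ) (x : Vec d) : ℝ :=
  ∫ x₀, k x x₀ * p₀ x₀

/-- The posterior density `p(x₀ | x) = k(x | x₀) p₀(x₀) / pₜ(x)`. -/
def post (k : Vec d → Vec d → ℝ) (p₀ : Vec d → ℝ) (x x₀ : Vec d) : ℝ :=
  k x x₀ * p₀ x₀ / pT k p₀ x

/-- The normalizing constant `Z = ∫ p₀(x₀) exp(r(x₀)/β) dx₀`. -/
def Zconst (p₀ r : Vec d → ℝ) (β : ℝ) : ℝ :=
  ∫ x₀, p₀ x₀ * Real.exp (r x₀ / β)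

/-- `G(y) = ∫ k(y | x₀) p₀(x₀) exp(r(x₀)/β) dx₀`. -/
def Gfun (k : Vec d → Vec d → ℝ) (p₀ r : Vec d → ℝ) (β : ℝ) (y : Vec d) : ℝ :=
  ∫ x₀, k y x₀ * p₀ x₀ * Real.exp (r x₀ / β)

/-- The reward-weighted density `q₀(x₀) = p₀(x₀) exp(r(x₀)/β) / Z`. -/
def q0 (p₀ r : Vec d → ℝ) (β : ℝ) (x₀ : Vec d) : ℝ :=
  p₀ x₀ * Real.exp (r x₀ / β) / Zconst p₀ r β

/-- The reward-weighted noised marginal `qₜ(x) = ∫ k(x | x₀) q₀(x₀) dx₀`. -/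
def qT (k : Vec d → Vec d → ℝ) (p₀ r : Vec d → ℝ) (β : ℝ) (x : Vec d) : ℝ :=
  ∫ x₀, k x x₀ * q0 p₀ r β x₀

section LogGradient

variable {E : Type*} [NormedAddCommGroup E] [InnerProductSpace ℝ E] [CompleteSpace E]
  {f g : E → ℝ} {x : E}

theorem gradient_fun_sub (hf : DifferentiableAt ℝ f x) (hg : DifferentiableAt ℝ g x) :
    gradient (fun y => f y - g y) x = gradient f x - gradient g x := by
  simp only [gradient, fderiv_fun_sub hf hg, map_sub]

theorem gradient_log_div (hf : DifferentiableAt ℝ f x) (hg : DifferentiableAt ℝ g x)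
    (hfx : f x ≠ 0) (hgx : g x ≠ 0) :
    gradient (fun y => Real.log (f y / g y)) x
      = gradient (fun y => Real.log (f y)) x - gradient (fun y => Real.log (g y)) x := by
  have hlog_div : (fun y => Real.log (f y / g y)) =ᶠ[nhds x]
      fun y => Real.log (f y) - Real.log (g y) := by
    filter_upwards [hf.continuousAt.eventually_ne hfx, hg.continuousAt.eventually_ne hgx]
      with y hfy hgy
    exact Real.log_div hfy hgy
  rw [hlog_div.gradient_eq, gradient_fun_sub (hf.log hfx) (hg.log hgx)]

theorem gradient_log_div_const (hf : DifferentiableAt ℝ f x) (hfx : f x ≠ 0) {c : ℝ}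
    (hc : c ≠ 0) :
    gradient (fun y => Real.log (f y / c)) x = gradient (fun y => Real.log (f y)) x := by
  rw [gradient_log_div (g := fun _ => c) hf (differentiableAt_const c) hfx hc,
    gradient_fun_const, sub_zero]

end LogGradient

theorem qT_eq_Gfun_div_Zconst (k : Vec d → Vec d → ℝ) (p₀ r : Vec d → ℝ) (β : ℝ) :
    qT k p₀ r β = fun y => Gfun k p₀ r β y / Zconst p₀ r β := by
  funext y
  simp only [qT, q0, Gfun, ← integral_div]
  congr 1 with x₀
  ring

theorem Gfun_div_pT_eq_integral_post (k : Vec d → Vec d → ℝ) (p₀ r : Vec d → ℝ) (β : ℝ)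
    (y : Vec d) :
    Gfun k p₀ r β y / pT k p₀ y = ∫ x₀, post k p₀ y x₀ * Real.exp (r x₀ / β) := by
  simp only [Gfun, post, ← integral_div]
  congr 1 with x₀
  ring

theorem reward_weighted_score_decomposition_general
    (d : ℕ)
    (p₀ : Vec d → ℝ)
    (k : Vec d → Vec d → ℝ)
    -- reward `r` and inverse temperature `β`; `Z` is finite and positive
    (r : Vec d → ℝ) (β : ℝ)
    (hZ_pos : 0 < Zconst p₀ r β)
    -- the point `x`
    (x : Vec d)
    -- `pₜ` is finite in a neighborhood of `x`, differentiable at `x`, and `pₜ(x) > 0`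
    (hpt_diff : DifferentiableAt ℝ (pT k p₀) x)
    (hpt_pos : 0 < pT k p₀ x)
    -- `G` is finite in a neighborhood of `x`, differentiable at `x`, and `G(x) > 0`
    (hG_diff : DifferentiableAt ℝ (Gfun k p₀ r β) x)
    (hG_pos : 0 < Gfun k p₀ r β x) :
    -- `qₜ = G / Z`
    (∀ y, qT k p₀ r β y = Gfun k p₀ r β y / Zconst p₀ r β) ∧
    -- `qₜ(x) > 0`
    0 < qT k p₀ r β x ∧
    -- `qₜ` is differentiable at `x`
    DifferentiableAt ℝ (qT k p₀ r β) x ∧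
    -- score decomposition: `∇ log qₜ(x) = ∇ log pₜ(x) + ∇[y ↦ log (G(y)/pₜ(y))](x)`
    gradient (fun y => Real.log (qT k p₀ r β y)) x
      = gradient (fun y => Real.log (pT k p₀ y)) x
        + gradient (fun y => Real.log (Gfun k p₀ r β y / pT k p₀ y)) x ∧
    -- `G/pₜ` is the posterior conditional expectation of `exp(r(·)/β)`
    (∀ y, 0 < pT k p₀ y →
      Gfun k p₀ r β y / pT k p₀ y
        = ∫ x₀, post k p₀ y x₀ * Real.exp (r x₀ / β)) := by
  rw [qT_eq_Gfun_div_Zconst]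
  refine ⟨fun _ => rfl, div_pos hG_pos hZ_pos, by fun_prop, ?_,
    fun y _ => Gfun_div_pT_eq_integral_post k p₀ r β y⟩
  rw [gradient_log_div_const hG_diff hG_pos.ne' hZ_pos.ne',
    gradient_log_div hG_diff hpt_diff hG_pos.ne' hpt_pos.ne']
  abel

/-- The score of the reward-weighted noised marginal decomposes as the
pre-trained score plus the gradient of the log conditional expectation of the
exponentiated reward. -/
theorem reward_weighted_score_decomposition
    (d : ℕ) (hd : 1 ≤ d)
    -- `p₀` is a probability density
    (p₀ : Vec d → ℝ) (hp₀_meas : Measurable p₀) (hp₀_nonneg : ∀ x₀, 0 ≤ p₀ x₀)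
    (hp₀_int : ∫ x₀, p₀ x₀ = 1)
    -- `k` is a forward kernel: nonnegative, measurable, and a density in its first argument
    (k : Vec d → Vec d → ℝ) (hk_meas : Measurable (Function.uncurry k))
    (hk_nonneg : ∀ y x₀, 0 ≤ k y x₀) (hk_dens : ∀ x₀, ∫ y, k y x₀ = 1)
    -- reward `r` and inverse temperature `β`; `Z` is finite and positive
    (r : Vec d → ℝ) (hr_meas : Measurable r) (β : ℝ) (hβ : 0 < β)
    (hZ_int : Integrable (fun x₀ => p₀ x₀ * Real.exp (r x₀ / β)))
    (hZ_pos : 0 < Zconst p₀ r β)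
    -- the point `x`
    (x : Vec d)
    -- `pₜ` is finite in a neighborhood of `x`, differentiable at `x`, and `pₜ(x) > 0`
    (hpt_fin : ∀ᶠ y in nhds x, Integrable fun x₀ => k y x₀ * p₀ x₀)
    (hpt_diff : DifferentiableAt ℝ (pT k p₀) x)
    (hpt_pos : 0 < pT k p₀ x)
    -- `G` is finite in a neighborhood of `x`, differentiable at `x`, and `G(x) > 0`
    (hG_fin : ∀ᶠ y in nhds x,
      Integrable fun x₀ => k y x₀ * p₀ x₀ * Real.exp (r x₀ / β))
    (hG_diff : DifferentiableAt ℝ (Gfun k p₀ r β) x)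
    (hG_pos : 0 < Gfun k p₀ r β x) :
    -- `qₜ = G / Z`
    (∀ y, qT k p₀ r β y = Gfun k p₀ r β y / Zconst p₀ r β) ∧
    -- `qₜ(x) > 0`
    0 < qT k p₀ r β x ∧
    -- `qₜ` is differentiable at `x`
    DifferentiableAt ℝ (qT k p₀ r β) x ∧
    -- score decomposition: `∇ log qₜ(x) = ∇ log pₜ(x) + ∇[y ↦ log (G(y)/pₜ(y))](x)`
    gradient (fun y => Real.log (qT k p₀ r β y)) x
      = gradient (fun y => Real.log (pT k p₀ y)) x
        + gradient (fun y => Real.log (Gfun k p₀ r β y / pT k p₀ y)) x ∧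
    -- `G/pₜ` is the posterior conditional expectation of `exp(r(·)/β)`
    (∀ y, 0 < pT k p₀ y →
      Gfun k p₀ r β y / pT k p₀ y
        = ∫ x₀, post k p₀ y x₀ * Real.exp (r x₀ / β)) :=
  reward_weighted_score_decomposition_general d p₀ k r β hZ_pos x hpt_diff hpt_pos hG_diff hG_pos

end
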